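/- For every nonempty word w over {L,R} with b = ℓ_b(w) blocks, (2b/3) + 8/9 + (−1)^b/(9·2^b) ≤ D²[P_w] < 2b. -/

import Mathlib

/-- The probability mass functions `P t` on ℤ, defined by
`P 1 = δ₀`, `P (2t) = P t`, `P (2t+1) d = ½ P (t+1) (d+1) + ½ P t (d-1)`. -/
noncomputable def P : ℕ → ℤ → ℝ
  | 0, _ => 0
  | 1, d => if d = 0 then 1 else 0
  | (n+2), d =>
      if h : (n + 2) % 2 = 0 then P ((n+2)/2) d
      else (1/2) * P ((n+2)/2 + 1) (d+1) + (1/2) * P ((n+2)/2) (d-1)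
  decreasing_by all_goals omega

/-- Letters of the alphabet. -/
inductive LR | L | R
deriving DecidableEq

/-- One step of the identification of words with odd integers: `L : t ↦ 2t-1`, `R : t ↦ 2t+1`. -/
def LRstep (t : ℕ) : LR → ℕ
  | LR.L => 2 * t - 1
  | LR.R => 2 * t + 1

/-- The odd integer associated to a word over `{L,R}`, starting from 3. -/
def hword (w : List LR) : ℕ := w.foldl LRstep 3

/-- The variance `D²[p] = ∑ k² p(k)` of a mean-zero probability mass function on ℤ. -/
noncomputable def var (p : ℤ → ℝ) : ℝ := ∑' k : ℤ, (k : ℝ) ^ 2 * p k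

/-- The number of blocks (maximal runs of a single letter) of a word. -/
def blocks : List LR → ℕ
  | [] => 0
  | [_] => 1
  | a :: b :: rest => (if a = b then 0 else 1) + blocks (b :: rest)

/-!
For odd `t = 2s + 1`, `P t` is the average of `P (s + 1)` shifted by `-1` and `P s` shifted by
`+1`; both parents have mean zero, so `D²[P t] = (D²[P (s + 1)] + D²[P s]) / 2 + 1`, and
`P (2t) = P t`. Appending a letter to a word with odd integer `h` yields an integer whose parents
are `h` and one parent of `h` (the lower one for `L`, the upper one for `R`). Hence the pair
(`A`, `S`) of the parent variances, `A` the one created by the last letter, evolves by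
`(A, S) ↦ ((A + S) / 2 + 1, S)` inside a block and by `(A, S) ↦ ((A + S) / 2 + 1, A)` at a
block change. Induction on the word preserves `S < A < S + 2`, `S ≤ 2(b - 1)`, and the lower
bounds `a (b - 1) ≤ S`, `a b ≤ A`, where `a` solves the block-change recursion; the variance
`(A + S) / 2 + 1` then lies between `a (b + 1)` and `2b`.
-/

lemma P_zero : P 0 = 0 := by
  funext d; rw [P]; rfl

lemma P_one : P 1 = fun d => if d = 0 then 1 else 0 := by
  funext d; rw [P]

lemma P_two_mul (t : ℕ) : P (2 * t) = P t := by
  rcases Nat.eq_zero_or_pos t with rfl | ht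
  · rfl
  funext d
  rw [show 2 * t = (2 * t - 2) + 2 by omega, P, dif_pos (by omega),
    show (2 * t - 2 + 2) / 2 = t by omega]

lemma P_two_mul_add_one {s : ℕ} (hs : 1 ≤ s) (d : ℤ) :
    P (2 * s + 1) d = (P (s + 1) (d + 1) + P s (d - 1)) / 2 := by
  rw [show 2 * s + 1 = (2 * s - 1) + 2 by omega, P, dif_neg (by omega),
    show (2 * s - 1 + 2) / 2 = s by omega]
  ring

@[elab_as_elim]
theorem P_induction {motive : ℕ → Prop} (one : motive 1)
    (two_mul : ∀ s, 1 ≤ s → motive s → motive (2 * s))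
    (two_mul_add_one : ∀ s, 1 ≤ s → motive (s + 1) → motive s → motive (2 * s + 1))
    {t : ℕ} (ht : 1 ≤ t) : motive t := by
  induction t using Nat.strong_induction_on with
  | _ t ih =>
    obtain ⟨s, rfl | rfl⟩ := Nat.even_or_odd' t
    · exact two_mul s (by omega) (ih s (by omega) (by omega))
    · rcases Nat.eq_zero_or_pos s with rfl | hs
      · exact one
      · exact two_mul_add_one s hs (ih _ (by omega) (by omega)) (ih s (by omega) hs)

lemma hasFiniteSupport_P (t : ℕ) : (P t).HasFiniteSupport := by
  rcases Nat.eq_zero_or_pos t with rfl | ht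
  · rw [P_zero]; exact Function.hasFiniteSupport_zero
  refine P_induction ?_ (fun s _ h => by rwa [P_two_mul]) (fun s hs h₁ h₀ => ?_) ht
  · rw [P_one]
    exact (Set.finite_singleton 0).subset (by simp)
  · rw [funext (P_two_mul_add_one hs)]
    exact ((h₁.fun_comp_of_injective (add_left_injective 1)).add
      (h₀.fun_comp_of_injective (sub_left_injective (b := 1)))).fun_comp
        (g := (· / 2)) (zero_div 2)

lemma summable_mul_P_add (g : ℤ → ℝ) (t : ℕ) (c : ℤ) :
    Summable fun k => g k * P t (k + c) :=
  summable_of_hasFiniteSupport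
    (((hasFiniteSupport_P t).fun_comp_of_injective (add_left_injective c)).mul_right g)

lemma summable_mul_P (g : ℤ → ℝ) (t : ℕ) : Summable fun k => g k * P t k := by
  simpa using summable_mul_P_add g t 0

lemma tsum_mul_P_add (g : ℝ → ℝ) (t : ℕ) (c : ℤ) :
    ∑' k : ℤ, g k * P t (k + c) = ∑' k : ℤ, g (k - c) * P t k := by
  simpa using (Equiv.addRight c).tsum_eq fun k => g ↑(k - c) * P t k

lemma tsum_add_mul_P (t : ℕ) (f g : ℤ → ℝ) :
    ∑' k, (f k + g k) * P t k = ∑' k, f k * P t k + ∑' k, g k * P t k := by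
  simp only [add_mul]
  exact (summable_mul_P f t).tsum_add (summable_mul_P g t)

lemma tsum_mul_P_two_mul_add_one {s : ℕ} (hs : 1 ≤ s) (g : ℝ → ℝ) :
    ∑' k : ℤ, g k * P (2 * s + 1) k
      = (∑' k : ℤ, g (k - 1) * P (s + 1) k + ∑' k : ℤ, g (k + 1) * P s k) / 2 := by
  calc ∑' k : ℤ, g k * P (2 * s + 1) k
      = (∑' k : ℤ, g k * P (s + 1) (k + 1) + ∑' k : ℤ, g k * P s (k + -1)) / 2 := by
        rw [← (summable_mul_P_add _ _ _).tsum_add (summable_mul_P_add _ _ _), ← tsum_div_const]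
        exact tsum_congr fun k => by rw [P_two_mul_add_one hs, ← sub_eq_add_neg]; ring
    _ = _ := by simp only [tsum_mul_P_add, Int.cast_neg, Int.cast_one, sub_neg_eq_add]

lemma tsum_P {t : ℕ} (ht : 1 ≤ t) : ∑' k, P t k = 1 := by
  refine P_induction ?_ (fun s _ h => by rwa [P_two_mul]) (fun s hs h₁ h₀ => ?_) ht
  · simp [P_one]
  · simpa [h₁, h₀] using tsum_mul_P_two_mul_add_one hs fun _ => 1

lemma tsum_mul_P {t : ℕ} (ht : 1 ≤ t) : ∑' k : ℤ, (k : ℝ) * P t k = 0 := by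
  refine P_induction ?_ (fun s _ h => by rwa [P_two_mul]) (fun s hs h₁ h₀ => ?_) ht
  · simp [P_one]
  · refine (tsum_mul_P_two_mul_add_one hs id).trans ?_
    simp only [id, sub_eq_add_neg, tsum_add_mul_P, h₁, h₀, neg_mul, one_mul,
      tsum_neg, tsum_P hs, tsum_P (Nat.le_add_left 1 s)]
    ring

lemma tsum_add_sq_mul_P {t : ℕ} (ht : 1 ≤ t) (c : ℝ) :
    ∑' k : ℤ, ((k : ℝ) + c) ^ 2 * P t k = var (P t) + c ^ 2 := by
  calc ∑' k : ℤ, ((k : ℝ) + c) ^ 2 * P t k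
      = ∑' k : ℤ, ((k : ℝ) ^ 2 + (2 * c * k + c ^ 2)) * P t k := by
        congr! 2 with k; ring
    _ = var (P t) + (2 * c * ∑' k : ℤ, (k : ℝ) * P t k + c ^ 2 * ∑' k, P t k) := by
        simp only [tsum_add_mul_P, mul_assoc, tsum_mul_left, var]
    _ = var (P t) + c ^ 2 := by rw [tsum_mul_P ht, tsum_P ht]; ring

lemma var_P_one : var (P 1) = 0 := by
  simp [var, P_one]

lemma var_P_two_mul_add_one {s : ℕ} (hs : 1 ≤ s) :
    var (P (2 * s + 1)) = (var (P (s + 1)) + var (P s)) / 2 + 1 := by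
  rw [var, tsum_mul_P_two_mul_add_one hs (· ^ 2)]
  simp only [sub_eq_add_neg, tsum_add_sq_mul_P hs, tsum_add_sq_mul_P (Nat.le_add_left 1 s)]
  ring

/-- The solution of `a (b + 2) = (a (b + 1) + a b) / 2 + 1` with `a 0 = 0`, `a 1 = 1`. -/
noncomputable def varLowerBound (b : ℕ) : ℝ := 2 * b / 3 + 2 / 9 - 2 / 9 * (-1 / 2) ^ b

lemma varLowerBound_add_two (b : ℕ) :
    varLowerBound (b + 2) = (varLowerBound (b + 1) + varLowerBound b) / 2 + 1 := by
  simp only [varLowerBound, pow_succ]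
  push_cast
  ring

lemma varLowerBound_le_succ (b : ℕ) : varLowerBound b ≤ varLowerBound (b + 1) := by
  have h : |(-1 / 2 : ℝ) ^ b| ≤ 1 := by
    rw [abs_pow]
    exact pow_le_one₀ (abs_nonneg _) (by norm_num [abs_div])
  simp only [varLowerBound, pow_succ]
  push_cast
  nlinarith [abs_le.mp h]

lemma varLowerBound_succ (b : ℕ) :
    varLowerBound (b + 1) = 2 * b / 3 + 8 / 9 + (-1) ^ b / (9 * 2 ^ b) := by
  simp only [varLowerBound, pow_succ, div_pow]
  push_cast
  field_simp
  ring

noncomputable def activeVar : LR → ℕ → ℝ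
  | LR.L, t => var (P (t / 2 + 1))
  | LR.R, t => var (P (t / 2))

noncomputable def staleVar : LR → ℕ → ℝ
  | LR.L, t => var (P (t / 2))
  | LR.R, t => var (P (t / 2 + 1))

/-- For a word with `b + 1` blocks and last letter `c`, `A` and `S` stand for
`activeVar c t` and `staleVar c t`, `t` the odd integer of the word. -/
structure BlockInv (b : ℕ) (A S : ℝ) : Prop where
  stale_lt : S < A
  lt_stale_add_two : A < S + 2
  stale_le : S ≤ 2 * b
  lowerBound_le_stale : varLowerBound b ≤ S
  lowerBound_le_active : varLowerBound (b + 1) ≤ A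

namespace BlockInv

variable {b : ℕ} {A S : ℝ}

lemma varLowerBound_le (h : BlockInv b A S) : varLowerBound (b + 2) ≤ (A + S) / 2 + 1 := by
  linarith [h.lowerBound_le_stale, h.lowerBound_le_active, varLowerBound_add_two b]

lemma stay (h : BlockInv b A S) : BlockInv b ((A + S) / 2 + 1) S :=
  ⟨by linarith [h.stale_lt], by linarith [h.lt_stale_add_two], h.stale_le,
    h.lowerBound_le_stale, (varLowerBound_le_succ (b + 1)).trans h.varLowerBound_le⟩

lemma switch (h : BlockInv b A S) : BlockInv (b + 1) ((A + S) / 2 + 1) A :=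
  ⟨by linarith [h.lt_stale_add_two], by linarith [h.stale_lt],
    by push_cast; linarith [h.lt_stale_add_two, h.stale_le], h.lowerBound_le_active,
    h.varLowerBound_le⟩

lemma lt_two_mul (h : BlockInv b A S) : (A + S) / 2 + 1 < 2 * (b + 1) := by
  linarith [h.lt_stale_add_two, h.stale_le]

end BlockInv

lemma hword_append_singleton (w : List LR) (c : LR) :
    hword (w ++ [c]) = LRstep (hword w) c := by
  simp [hword]

lemma odd_hword (w : List LR) : Odd (hword w) := by
  induction w using List.reverseRecOn with
  | nil => decide
  | append_singleton w c ih =>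
    rw [hword_append_singleton, Nat.odd_iff]
    rw [Nat.odd_iff] at ih
    cases c <;> simp only [LRstep] <;> omega

lemma three_le_hword (w : List LR) : 3 ≤ hword w := by
  induction w using List.reverseRecOn with
  | nil => decide
  | append_singleton w c ih =>
    rw [hword_append_singleton]
    cases c <;> simp only [LRstep] <;> omega

lemma blocks_pos : ∀ {w : List LR}, w ≠ [] → 0 < blocks w
  | [_], _ => Nat.one_pos
  | _ :: b :: rest, _ => by
    have := blocks_pos (List.cons_ne_nil b rest)
    simp only [blocks]
    omega

lemma blocks_append_pair (a c : LR) :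
    ∀ w : List LR, blocks (w ++ [a] ++ [c]) = blocks (w ++ [a]) + if a = c then 0 else 1
  | [] => by simp [blocks, add_comm]
  | [_] => by simp only [List.cons_append, List.nil_append, blocks]; ring
  | x :: y :: w => by
    have := blocks_append_pair a c (y :: w)
    simp only [List.cons_append, blocks] at this ⊢
    omega

section

variable {t : ℕ}

lemma var_P_eq_activeVar_add_staleVar (c : LR) (ht : 3 ≤ t) (hodd : Odd t) :
    var (P t) = (activeVar c t + staleVar c t) / 2 + 1 := by
  obtain ⟨s, rfl⟩ := hodd
  have hs : (2 * s + 1) / 2 = s := by omega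
  rw [var_P_two_mul_add_one (by omega)]
  cases c
  · simp only [activeVar, staleVar, hs]
  · simp only [activeVar, staleVar, hs]; ring

lemma activeVar_LRstep (c : LR) (ht : 1 ≤ t) : activeVar c (LRstep t c) = var (P t) := by
  cases c <;> (simp only [activeVar, LRstep]; congr 2; omega)

lemma staleVar_LRstep_self (c : LR) (hodd : Odd t) : staleVar c (LRstep t c) = staleVar c t := by
  obtain ⟨s, rfl⟩ := hodd
  have hs : (2 * s + 1) / 2 = s := by omega
  have hL : (2 * (2 * s + 1) - 1) / 2 = 2 * s := by omega
  have hR : (2 * (2 * s + 1) + 1) / 2 + 1 = 2 * (s + 1) := by omega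
  cases c <;> simp only [staleVar, LRstep, hs, hL, hR, P_two_mul]

lemma staleVar_LRstep_of_ne {a c : LR} (hac : a ≠ c) (hodd : Odd t) :
    staleVar c (LRstep t c) = activeVar a t := by
  obtain ⟨s, rfl⟩ := hodd
  have hs : (2 * s + 1) / 2 = s := by omega
  have hL : (2 * (2 * s + 1) - 1) / 2 = 2 * s := by omega
  have hR : (2 * (2 * s + 1) + 1) / 2 + 1 = 2 * (s + 1) := by omega
  cases a <;> cases c <;> first
    | exact absurd rfl hac
    | simp only [staleVar, activeVar, LRstep, hs, hL, hR, P_two_mul]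

end

theorem blockInv_hword (w : List LR) (c : LR) :
    BlockInv (blocks (w ++ [c]) - 1) (activeVar c (hword (w ++ [c])))
      (staleVar c (hword (w ++ [c]))) := by
  induction w using List.reverseRecOn generalizing c with
  | nil =>
    have h2 : P 2 = P 1 := P_two_mul 1
    have hvar : var (P 3) = 1 := by
      rw [var_P_two_mul_add_one (s := 1) le_rfl]; norm_num [h2, var_P_one]
    have hstale : staleVar c 3 = 0 := by
      cases c <;> simp [staleVar, h2, var_P_one]
    rw [hword_append_singleton, activeVar_LRstep c (by decide),
      staleVar_LRstep_self c (odd_hword []), show hword [] = 3 from rfl, hstale, hvar,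
      List.nil_append]
    exact ⟨by norm_num, by norm_num, by norm_num [blocks], by norm_num [blocks, varLowerBound],
      by norm_num [blocks, varLowerBound]⟩
  | append_singleton w a ih =>
    have hvar := var_P_eq_activeVar_add_staleVar a (three_le_hword _) (odd_hword (w ++ [a]))
    rw [hword_append_singleton, activeVar_LRstep c (by linarith [three_le_hword (w ++ [a])]),
      blocks_append_pair, hvar]
    by_cases hac : a = c
    · subst hac
      rw [staleVar_LRstep_self a (odd_hword _), if_pos rfl, add_zero]
      exact (ih a).stay
    · have hpos := blocks_pos (List.concat_ne_nil a w)
      rw [staleVar_LRstep_of_ne hac (odd_hword _), if_neg hac,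
        show blocks (w ++ [a]) + 1 - 1 = blocks (w ++ [a]) - 1 + 1 by omega]
      exact (ih a).switch

/-- For a nonempty word `w` with `b = ℓ_b(w)` blocks,
`2b/3 + 8/9 + (-1)^b / (9 · 2^b) ≤ D²[P_w] < 2b`. -/
theorem variance_blocks_bounds (w : List LR) (hne : w ≠ []) :
    2 * (blocks w : ℝ) / 3 + 8 / 9 + (-1 : ℝ) ^ (blocks w) / (9 * 2 ^ (blocks w))
      ≤ var (P (hword w)) ∧
    var (P (hword w)) < 2 * (blocks w : ℝ) := by
  obtain ⟨w, c, rfl⟩ := (List.eq_nil_or_concat' w).resolve_left hne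
  obtain ⟨b, hb⟩ := Nat.exists_eq_add_one_of_ne_zero (blocks_pos hne).ne'
  have hinv := blockInv_hword w c
  rw [hb, Nat.add_sub_cancel] at hinv
  rw [var_P_eq_activeVar_add_staleVar c (three_le_hword _) (odd_hword _), hb,
    ← varLowerBound_succ]
  exact ⟨hinv.varLowerBound_le, by push_cast; exact hinv.lt_two_mul⟩
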